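/- Fix a real number N > 0 and integers S, P with 1 ≤ S < P. Let R_m : [0, NP/(P−S)] → ℝ be the magnetic (mirror) rank function, defined by R_m(η) = (P − S)η for 0 ≤ η ≤ SN/(P − S) and R_m(η) = S(NP/(P − S) − η) for SN/(P − S) ≤ η ≤ NP/(P − S). Then for every integer k ≥ 1, the magnetic Fourier sine coefficient a_k^{(m)} = ((P − S)/(NP)) ∫₀^{NP/(P−S)} R_m(η) sin(kπ(P − S)η/(NP)) dη equals (N P²/((P − S) π² k²)) sin(kπS/P); in particular it coincides with the Fourier sine coefficient a_k^{(e)} = (N P²/((P − S) π² k²)) sin(kπS/P) of the electric triangular rank function. -/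

import Mathlib

/-!
On `[0, L]` with `L = NP/(P-S)` the magnetic rank function is a tent with slopes `P - S` and
`-S` meeting at `s = SN/(P-S)`, and the frequency is `c = kπ/L`. Integrating a tent against
`sin (c x)` piece by piece, the `cos (c s)` boundary terms cancel because the two pieces agree
at the apex, and the `sin (c L)` term vanishes, leaving `(slope sum) · sin (c s) / c²`.
With slope sum `P` and `c s = kπS/P` this is the electric coefficient.
-/

open MeasureTheory Real

lemma hasDerivAt_affine_mul_sin_primitive (p q : ℝ) {c : ℝ} (hc : c ≠ 0) (x : ℝ) :
    HasDerivAt (fun x => p * sin (c * x) / c ^ 2 - (p * x + q) * cos (c * x) / c)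
      ((p * x + q) * sin (c * x)) x := by
  have hcx : HasDerivAt (fun x : ℝ => c * x) c x := by
    simpa using (hasDerivAt_id x).const_mul c
  have hsin : HasDerivAt (fun x => sin (c * x)) (cos (c * x) * c) x :=
    (hasDerivAt_sin (c * x)).comp x hcx
  have hcos : HasDerivAt (fun x => cos (c * x)) (-sin (c * x) * c) x :=
    (hasDerivAt_cos (c * x)).comp x hcx
  have haff : HasDerivAt (fun x : ℝ => p * x + q) p x := by
    simpa using ((hasDerivAt_id x).const_mul p).add_const q
  refine ((hsin.const_mul p).div_const (c ^ 2)).sub ((haff.mul hcos).div_const c)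
    |>.congr_deriv ?_
  field_simp
  ring

lemma integral_affine_mul_sin (p q : ℝ) {c : ℝ} (hc : c ≠ 0) (a b : ℝ) :
    ∫ x in a..b, (p * x + q) * sin (c * x) =
      (p * sin (c * b) / c ^ 2 - (p * b + q) * cos (c * b) / c) -
        (p * sin (c * a) / c ^ 2 - (p * a + q) * cos (c * a) / c) :=
  intervalIntegral.integral_eq_sub_of_hasDerivAt
    (fun x _ => hasDerivAt_affine_mul_sin_primitive p q hc x)
    ((by fun_prop : Continuous fun x => (p * x + q) * sin (c * x)).intervalIntegrable a b)

lemma integral_eqOn_affine_mul_sin {f : ℝ → ℝ} {p q c a b : ℝ} (hc : c ≠ 0)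
    (hf : Set.EqOn f (fun x => p * x + q) (Set.uIcc a b)) :
    IntervalIntegrable (fun x => f x * sin (c * x)) volume a b ∧
      ∫ x in a..b, f x * sin (c * x) =
        (p * sin (c * b) / c ^ 2 - (p * b + q) * cos (c * b) / c) -
          (p * sin (c * a) / c ^ 2 - (p * a + q) * cos (c * a) / c) := by
  have heq : Set.EqOn (fun x => f x * sin (c * x)) (fun x => (p * x + q) * sin (c * x))
      (Set.uIcc a b) := fun x hx => by simp only [hf hx]
  refine ⟨?_, by rw [intervalIntegral.integral_congr heq, integral_affine_mul_sin p q hc]⟩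
  exact (intervalIntegrable_congr (heq.mono Set.uIoc_subset_uIcc)).mpr
    ((by fun_prop : Continuous fun x => (p * x + q) * sin (c * x)).intervalIntegrable a b)

theorem integral_tent_mul_sin {f : ℝ → ℝ} {α β s L c : ℝ} (hs : 0 ≤ s) (hsL : s ≤ L)
    (hc : c ≠ 0) (hrise : ∀ x ∈ Set.Icc 0 s, f x = α * x)
    (hfall : ∀ x ∈ Set.Icc s L, f x = β * (L - x)) :
    ∫ x in 0..L, f x * sin (c * x) = ((α + β) * sin (c * s) - β * sin (c * L)) / c ^ 2 := by
  have hapex : α * s = β * (L - s) := by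
    rw [← hrise s ⟨hs, le_rfl⟩, hfall s ⟨le_rfl, hsL⟩]
  obtain ⟨hint₁, hval₁⟩ := integral_eqOn_affine_mul_sin (f := f) (p := α) (q := 0) hc
    fun x hx => by rw [Set.uIcc_of_le hs] at hx; simp [hrise x hx]
  obtain ⟨hint₂, hval₂⟩ := integral_eqOn_affine_mul_sin (f := f) (p := -β) (q := β * L) hc
    fun x hx => by rw [Set.uIcc_of_le hsL] at hx; simp only [hfall x hx]; ring
  rw [← intervalIntegral.integral_add_adjacent_intervals hint₁ hint₂, hval₁, hval₂]
  simp only [mul_zero, add_zero, sin_zero, zero_div]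
  field_simp
  linear_combination (-(c * cos (c * s))) * hapex

theorem stmt18_general (N : ℝ) (hN : 0 < N) (S P : ℕ) (hSP : S < P)
    (Rm : ℝ → ℝ)
    (hRm1 : ∀ η ∈ Set.Icc (0 : ℝ) ((S : ℝ) * N / ((P : ℝ) - (S : ℝ))),
      Rm η = ((P : ℝ) - (S : ℝ)) * η)
    (hRm2 : ∀ η ∈ Set.Icc ((S : ℝ) * N / ((P : ℝ) - (S : ℝ))) (N * (P : ℝ) / ((P : ℝ) - (S : ℝ))),
      Rm η = (S : ℝ) * (N * (P : ℝ) / ((P : ℝ) - (S : ℝ)) - η))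
    (am ae : ℕ → ℝ)
    (ham : ∀ k : ℕ, am k = (((P : ℝ) - (S : ℝ)) / (N * (P : ℝ))) *
      ∫ η in (0 : ℝ)..(N * (P : ℝ) / ((P : ℝ) - (S : ℝ))),
        Rm η * Real.sin ((k : ℝ) * Real.pi * ((P : ℝ) - (S : ℝ)) * η / (N * (P : ℝ))))
    (hae : ∀ k : ℕ, ae k = N * (P : ℝ) ^ 2 / (((P : ℝ) - (S : ℝ)) * Real.pi ^ 2 * (k : ℝ) ^ 2) *
      Real.sin ((k : ℝ) * Real.pi * (S : ℝ) / P)) :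
    ∀ k : ℕ, 1 ≤ k →
      am k = N * (P : ℝ) ^ 2 / (((P : ℝ) - (S : ℝ)) * Real.pi ^ 2 * (k : ℝ) ^ 2) *
          Real.sin ((k : ℝ) * Real.pi * (S : ℝ) / P) ∧
      am k = ae k := by
  intro k hk
  have hSP' : (S : ℝ) < P := by exact_mod_cast hSP
  have hb : (0 : ℝ) < P - S := by linarith
  have hP : (0 : ℝ) < P := by linarith [S.cast_nonneg (α := ℝ)]
  have hk0 : (0 : ℝ) < k := by exact_mod_cast hk
  set c := (k : ℝ) * π * (P - S) / (N * P) with hc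
  have hc0 : c ≠ 0 := by positivity
  have hsL : (S : ℝ) * N / (P - S) ≤ N * P / (P - S) :=
    div_le_div_of_nonneg_right (by nlinarith) hb.le
  have hint := integral_tent_mul_sin (by positivity) hsL hc0 hRm1 hRm2
  have hcL : sin (c * (N * P / (P - S))) = 0 := by
    rw [← sin_nat_mul_pi k, hc]; congr 1; field_simp
  have hcs : c * (S * N / (P - S)) = k * π * S / P := by rw [hc]; field_simp
  have hfreq : (fun η => Rm η * sin (k * π * (P - S) * η / (N * P))) =
      fun η => Rm η * sin (c * η) := funext fun η => by rw [hc]; congr 2; ring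
  have key : am k = N * P ^ 2 / ((P - S) * π ^ 2 * k ^ 2) * sin (k * π * S / P) := by
    rw [ham k, hfreq, hint, hcL, hcs, hc]
    field_simp
    ring
  exact ⟨key, key.trans (hae k).symm⟩

/-- The Fourier sine coefficients of the magnetic (mirror) rank function equal
`(NP²/((P−S)π²k²)) sin(kπS/P)` and hence coincide with the electric coefficients. -/
theorem stmt18 (N : ℝ) (hN : 0 < N) (S P : ℕ) (hS : 1 ≤ S) (hSP : S < P)
    (Rm : ℝ → ℝ)
    (hRm1 : ∀ η ∈ Set.Icc (0 : ℝ) ((S : ℝ) * N / ((P : ℝ) - (S : ℝ))),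
      Rm η = ((P : ℝ) - (S : ℝ)) * η)
    (hRm2 : ∀ η ∈ Set.Icc ((S : ℝ) * N / ((P : ℝ) - (S : ℝ))) (N * (P : ℝ) / ((P : ℝ) - (S : ℝ))),
      Rm η = (S : ℝ) * (N * (P : ℝ) / ((P : ℝ) - (S : ℝ)) - η))
    (am ae : ℕ → ℝ)
    (ham : ∀ k : ℕ, am k = (((P : ℝ) - (S : ℝ)) / (N * (P : ℝ))) *
      ∫ η in (0 : ℝ)..(N * (P : ℝ) / ((P : ℝ) - (S : ℝ))),
        Rm η * Real.sin ((k : ℝ) * Real.pi * ((P : ℝ) - (S : ℝ)) * η / (N * (P : ℝ))))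
    (hae : ∀ k : ℕ, ae k = N * (P : ℝ) ^ 2 / (((P : ℝ) - (S : ℝ)) * Real.pi ^ 2 * (k : ℝ) ^ 2) *
      Real.sin ((k : ℝ) * Real.pi * (S : ℝ) / P)) :
    ∀ k : ℕ, 1 ≤ k →
      am k = N * (P : ℝ) ^ 2 / (((P : ℝ) - (S : ℝ)) * Real.pi ^ 2 * (k : ℝ) ^ 2) *
          Real.sin ((k : ℝ) * Real.pi * (S : ℝ) / P) ∧
      am k = ae k :=
  stmt18_general N hN S P hSP Rm hRm1 hRm2 am ae ham hae
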